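/- arXiv:0706.0889 — 2 statements merged into one kernel-verified Lean document; each statement's English description precedes it below -/
import Mathlib

section
/- Let k ≥ 1 and let s = (a_1, …, a_j) be a finite sequence of positive integers that occurs in the cycle of gaps Δ(p_k). If j < p_{k+1} − 1, then for every K ≥ k the sequence s occurs in the cycle of gaps Δ(p_K). -/
/-- `nthPrime k` is the k-th prime `p_k` (1-indexed: `p_1 = 2`). -/
noncomputable def nthPrime (k : ℕ) : ℕ := Nat.nth Nat.Prime (k - 1)

/-- `primor k` is the primorial `Π_k = p_1 ⋯ p_k`. -/
noncomputable def primor (k : ℕ) : ℕ := ∏ i ∈ Finset.range k, Nat.nth Nat.Prime i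

/-- The constellation (list of gaps) `s` occurs at `c` in the cycle of gaps modulo `N`:
the successive partial sums `c, c + a₁, c + a₁ + a₂, …` are all coprime to `N` and no
integer strictly between two consecutive of them is coprime to `N`. -/
def OccursAt (N : ℕ) : List ℕ → ℕ → Prop
  | [], c => Nat.Coprime c N
  | a :: t, c => Nat.Coprime c N ∧ (∀ m : ℕ, c < m → m < c + a → ¬ Nat.Coprime m N) ∧
      OccursAt N t (c + a)

/-- The constellation `s` occurs (somewhere) in the cycle of gaps modulo `N`. -/
def Occurs (N : ℕ) (s : List ℕ) : Prop := ∃ c : ℕ, 1 ≤ c ∧ OccursAt N s c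

lemma primor_succ (K : ℕ) : primor (K + 1) = primor K * Nat.nth Nat.Prime K :=
  Finset.prod_range_succ _ _

lemma not_dvd_primor (K : ℕ) : ¬ Nat.nth Nat.Prime K ∣ primor K := by
  intro h
  have hp := Nat.prime_nth_prime K
  obtain ⟨i, hi, hdvd⟩ := (hp.prime.dvd_finset_prod_iff _).mp h
  have heq : Nat.nth Nat.Prime K = Nat.nth Nat.Prime i :=
    (Nat.prime_dvd_prime_iff_eq hp (Nat.prime_nth_prime i)).mp hdvd
  have := Nat.nth_injective Nat.infinite_setOf_prime heq
  simp only [Finset.mem_range] at hi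
  omega

lemma occursAt_shift (N t : ℕ) : ∀ (s : List ℕ) (c : ℕ),
    OccursAt N s c → OccursAt N s (c + t * N)
  | [], c, h => by
    simpa [OccursAt] using (Nat.coprime_add_mul_right_left c N t).mpr h
  | a :: tl, c, ⟨h1, h2, h3⟩ => by
    refine ⟨(Nat.coprime_add_mul_right_left c N t).mpr h1, ?_, ?_⟩
    · intro m hm1 hm2 hc
      have hm : t * N ≤ m := le_trans (Nat.le_add_left _ _) hm1.le
      apply h2 (m - t * N) (by omega) (by omega)
      have hmm : m - t * N + t * N = m := by omega
      rw [← hmm] at hc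
      exact (Nat.coprime_add_mul_right_left _ N t).mp hc
    · have := occursAt_shift N t tl (c + a) h3
      have hr : c + a + t * N = c + t * N + a := by ring
      rwa [hr] at this

lemma occursAt_lift (N p : ℕ) (hp : p.Prime) : ∀ (s : List ℕ) (c : ℕ),
    OccursAt N s c → (∀ i ≤ s.length, ¬ p ∣ c + (s.take i).sum) →
    OccursAt (N * p) s c
  | [], c, h, hd => by
    have h0 := hd 0 (by simp)
    simp only [List.take_zero, List.sum_nil, Nat.add_zero] at h0
    exact Nat.coprime_mul_iff_right.mpr
      ⟨h, Nat.coprime_comm.mp ((hp.coprime_iff_not_dvd).mpr h0)⟩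
  | a :: tl, c, ⟨h1, h2, h3⟩, hd => by
    have h0 := hd 0 (by simp)
    simp only [List.take_zero, List.sum_nil, Nat.add_zero] at h0
    refine ⟨Nat.coprime_mul_iff_right.mpr
      ⟨h1, Nat.coprime_comm.mp ((hp.coprime_iff_not_dvd).mpr h0)⟩, ?_, ?_⟩
    · intro m hm1 hm2 hc
      exact h2 m hm1 hm2 (Nat.Coprime.coprime_dvd_right ⟨p, rfl⟩ hc)
    · apply occursAt_lift N p hp tl (c + a) h3
      intro i hi
      have := hd (i + 1) (by simpa using hi)
      simpa [List.take_succ_cons, List.sum_cons, Nat.add_assoc] using this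

lemma occurs_step (K : ℕ) (s : List ℕ) (h : Occurs (primor K) s)
    (hlen : s.length + 1 < Nat.nth Nat.Prime K) : Occurs (primor (K + 1)) s := by
  obtain ⟨c, hc, hocc⟩ := h
  set p := Nat.nth Nat.Prime K with hpdef
  set N := primor K with hNdef
  have hp : p.Prime := Nat.prime_nth_prime K
  haveI : Fact p.Prime := ⟨hp⟩
  have hN0 : (N : ZMod p) ≠ 0 := by
    rw [Ne, ZMod.natCast_eq_zero_iff]
    exact not_dvd_primor K
  let g : ℕ → ZMod p := fun i => (-(c + (s.take i).sum : ℕ) : ZMod p) * (N : ZMod p)⁻¹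
  obtain ⟨x, hx⟩ : ∃ x : ZMod p, x ∉ (Finset.range (s.length + 1)).image g := by
    by_contra hcon
    push_neg at hcon
    have hsub : (Finset.univ : Finset (ZMod p)) ⊆ (Finset.range (s.length + 1)).image g :=
      fun y _ => hcon y
    have h1 := Finset.card_le_card hsub
    have h2 := Finset.card_image_le (s := Finset.range (s.length + 1)) (f := g)
    rw [Finset.card_univ, ZMod.card] at h1
    rw [Finset.card_range] at h2
    omega
  refine ⟨c + x.val * N, hc.trans (Nat.le_add_right _ _), ?_⟩
  rw [primor_succ, ← hpdef, ← hNdef]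
  apply occursAt_lift N p hp s _ (occursAt_shift N x.val s c hocc)
  intro i hi hdvd
  apply hx
  refine Finset.mem_image.mpr ⟨i, Finset.mem_range.mpr (by omega), ?_⟩
  have hz : ((c + x.val * N + (s.take i).sum : ℕ) : ZMod p) = 0 :=
    (ZMod.natCast_eq_zero_iff _ _).mpr hdvd
  rw [Nat.cast_add, Nat.cast_add, Nat.cast_mul, ZMod.natCast_val, ZMod.cast_id] at hz
  have hxN : x * (N : ZMod p) = -((c : ZMod p) + ((s.take i).sum : ℕ)) := by
    linear_combination hz
  show (-(c + (s.take i).sum : ℕ) : ZMod p) * (N : ZMod p)⁻¹ = x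
  rw [Nat.cast_add, ← hxN, mul_assoc, mul_inv_cancel₀ hN0, mul_one]

theorem stmt_13 (k : ℕ) (hk : 1 ≤ k) (s : List ℕ) (hpos : ∀ a ∈ s, 0 < a)
    (hocc : Occurs (primor k) s) (hlen : s.length < nthPrime (k + 1) - 1) :
    ∀ K : ℕ, k ≤ K → Occurs (primor K) s := by
  intro K hK
  induction K, hK using Nat.le_induction with
  | base => exact hocc
  | succ K hkK ih =>
    apply occurs_step K s ih
    have h1 : nthPrime (k + 1) = Nat.nth Nat.Prime k := by simp [nthPrime]
    have h2 : Nat.nth Nat.Prime k ≤ Nat.nth Nat.Prime K :=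
      Nat.nth_monotone Nat.infinite_setOf_prime hkK
    have h3 : 2 ≤ Nat.nth Nat.Prime k := (Nat.prime_nth_prime k).two_le
    omega
end

section
/- Assume Hypothesis (H). Then for every positive real number M there are infinitely many indices n with g_n > M·g_{n+1}, and infinitely many indices n with g_{n+1} > M·g_n. Consequently limsup_{n→∞} g_n/g_{n+1} = ∞ and liminf_{n→∞} g_n/g_{n+1} = 0. (This answers the first question of Erdős and Turán on the ratios of consecutive prime gaps.) -/
/-- `gap n = g_n = p_{n+1} - p_n`, the n-th gap between consecutive primes. -/
noncomputable def gap (n : ℕ) : ℕ := nthPrime (n + 1) - nthPrime n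

/-- Hypothesis (H): every sufficiently small constellation occurring in a cycle of gaps
`Δ(p_k)` occurs infinitely often as a constellation among the prime numbers. -/
def HypothesisH : Prop :=
  ∀ k : ℕ, 1 ≤ k → ∀ s : List ℕ, (∀ a ∈ s, 0 < a) → Occurs (primor k) s →
    s.length < nthPrime (k + 1) - 1 → s.sum < 2 * nthPrime (k + 1) →
    ∀ N : ℕ, ∃ n : ℕ, N ≤ n ∧ ∀ i : ℕ, i < s.length → gap (n + i) = s.getD i 0

/- ### Auxiliary lemmas -/

private lemma prime_infinite : (setOf Nat.Prime).Infinite := Nat.infinite_setOf_prime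

private lemma prime_dvd_primor {q k : ℕ} (hq : q.Prime) (h : q < Nat.nth Nat.Prime k) :
    q ∣ primor k := by
  have h1 : Nat.nth Nat.Prime (Nat.count Nat.Prime q) = q := Nat.nth_count hq
  have hlt : Nat.count Nat.Prime q < k := by
    rw [← Nat.nth_lt_nth prime_infinite, h1]; exact h
  exact h1 ▸ Finset.dvd_prod_of_mem _ (Finset.mem_range.mpr hlt)

private lemma not_coprime_of_dvd {q m N : ℕ} (hq : q.Prime) (h1 : q ∣ m) (h2 : q ∣ N) :
    ¬ Nat.Coprime m N :=
  Nat.Prime.not_coprime_iff_dvd.mpr ⟨q, hq, h1, h2⟩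

private lemma not_coprime_primor {j k : ℕ} (h2 : 2 ≤ j) (hlt : j < Nat.nth Nat.Prime k) :
    ¬ Nat.Coprime j (primor k) := by
  have hq : (j.minFac).Prime := Nat.minFac_prime (by omega)
  have hdvd : j.minFac ∣ j := Nat.minFac_dvd j
  exact not_coprime_of_dvd hq hdvd
    (prime_dvd_primor hq (lt_of_le_of_lt (Nat.minFac_le (by omega)) hlt))

private lemma coprime_nth_primor (k : ℕ) :
    Nat.Coprime (Nat.nth Nat.Prime k) (primor k) := by
  have hp := Nat.prime_nth_prime k
  rw [Nat.Prime.coprime_iff_not_dvd hp]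
  intro hdvd
  obtain ⟨i, hi, hdvd'⟩ := (hp.prime.dvd_finset_prod_iff _).mp hdvd
  have : Nat.nth Nat.Prime k = Nat.nth Nat.Prime i :=
    (Nat.prime_dvd_prime_iff_eq hp (Nat.prime_nth_prime i)).mp hdvd'
  have hik : i < k := Finset.mem_range.mp hi
  have : Nat.nth Nat.Prime i < Nat.nth Nat.Prime k :=
    (Nat.nth_lt_nth prime_infinite).mpr hik
  omega

private lemma coprime_sub_primor {m k : ℕ} (hm : m ≤ primor k)
    (hc : Nat.Coprime m (primor k)) : Nat.Coprime (primor k - m) (primor k) := by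
  set N := primor k
  set g := Nat.gcd (N - m) N with hg
  have hg1 : g ∣ N - m := Nat.gcd_dvd_left _ _
  have hg2 : g ∣ N := Nat.gcd_dvd_right _ _
  have hgm : g ∣ m := by
    have hd := Nat.dvd_sub hg2 hg1
    have e : N - (N - m) = m := by omega
    rwa [e] at hd
  have : g ∣ 1 := hc ▸ Nat.dvd_gcd hgm hg2
  exact Nat.dvd_one.mp this

private lemma coprime_add_primor {m k : ℕ} (hc : Nat.Coprime m (primor k)) :
    Nat.Coprime (primor k + m) (primor k) := by
  rw [Nat.add_comm, Nat.coprime_add_self_left]; exact hc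

private lemma primor_pos (k : ℕ) : 0 < primor k :=
  Finset.prod_pos fun i _ => (Nat.prime_nth_prime i).pos

private lemma nth_ge (k : ℕ) : k + 2 ≤ Nat.nth Nat.Prime k := by
  induction k with
  | zero => simp [Nat.nth_prime_zero_eq_two]
  | succ n ih =>
      have : Nat.nth Nat.Prime n < Nat.nth Nat.Prime (n + 1) :=
        (Nat.nth_lt_nth prime_infinite).mpr (Nat.lt_succ_self n)
      omega

private lemma six_le_primor {k : ℕ} (hk : 2 ≤ k) : 6 ≤ primor k := by
  have h2 : (2 : ℕ) ∣ primor k := by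
    refine prime_dvd_primor Nat.prime_two ?_
    have := nth_ge k; omega
  have h3 : (3 : ℕ) ∣ primor k := by
    refine prime_dvd_primor Nat.prime_three ?_
    have := nth_ge k; omega
  have h6 : (6 : ℕ) ∣ primor k := Nat.Coprime.mul_dvd_of_dvd_of_dvd (by norm_num) h2 h3
  exact Nat.le_of_dvd (primor_pos k) h6

/-- Euclid's argument: `p_{k+1} < Π_k` for `k ≥ 2`. -/
private lemma nth_lt_primor {k : ℕ} (hk : 2 ≤ k) : Nat.nth Nat.Prime k < primor k := by
  set N := primor k with hN
  have h6 : 6 ≤ N := six_le_primor hk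
  have hq : (N - 1).minFac.Prime := Nat.minFac_prime (by omega)
  have hq1 : (N - 1).minFac ∣ N - 1 := Nat.minFac_dvd _
  have hqle : (N - 1).minFac ≤ N - 1 := Nat.minFac_le (by omega)
  by_contra h
  push_neg at h
  -- every prime `< nth k` divides `N`; in particular if minFac < nth k we get contradiction
  rcases lt_or_ge ((N - 1).minFac) (Nat.nth Nat.Prime k) with hlt | hge
  · have hdvdN : (N - 1).minFac ∣ N := prime_dvd_primor hq hlt
    have : (N - 1).minFac ∣ 1 := by
      have hd := Nat.dvd_sub hdvdN hq1
      have e : N - (N - 1) = 1 := by omega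
      rwa [e] at hd
    exact hq.one_lt.ne' (Nat.eq_one_of_dvd_one this)
  · omega

/-- Occurrence of the constellation `[p_{k+1} - 1, 2]` in `Δ(p_k)`. -/
private lemma occursA {k : ℕ} (hk : 2 ≤ k) :
    Occurs (primor k) [Nat.nth Nat.Prime k - 1, 2] := by
  set N := primor k with hN
  set p := Nat.nth Nat.Prime k with hp
  have hpN : p < N := nth_lt_primor hk
  have hp2 : 4 ≤ p := by have := nth_ge k; omega
  have h6 : 6 ≤ N := six_le_primor hk
  refine ⟨N - p, by omega, ?_⟩
  have e1 : N - p + (p - 1) = N - 1 := by omega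
  have e2 : N - p + (p - 1) + 2 = N + 1 := by omega
  refine ⟨?_, ?_, ?_, ?_, ?_⟩
  · exact coprime_sub_primor (by omega) (coprime_nth_primor k)
  · intro m hm1 hm2
    rw [e1] at hm2
    have hj2 : 2 ≤ N - m := by omega
    have hjp : N - m < p := by omega
    have hq : ((N - m).minFac).Prime := Nat.minFac_prime (by omega)
    have hqd : (N - m).minFac ∣ N := prime_dvd_primor hq
      (lt_of_le_of_lt (Nat.minFac_le (by omega)) hjp)
    have hqm : (N - m).minFac ∣ m := by
      have hd := Nat.dvd_sub hqd (Nat.minFac_dvd (N - m))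
      have e : N - (N - m) = m := by omega
      rwa [e] at hd
    exact not_coprime_of_dvd hq hqm hqd
  · rw [e1]
    exact coprime_sub_primor (by omega) (Nat.coprime_one_left N)
  · intro m hm1 hm2
    rw [e1] at hm1; rw [e2] at hm2
    have : m = N := by omega
    subst this
    exact not_coprime_of_dvd Nat.prime_two
      (prime_dvd_primor Nat.prime_two (by omega))
      (prime_dvd_primor Nat.prime_two (by omega))
  · show Nat.Coprime (N - p + (p - 1) + 2) N
    rw [e2]
    exact coprime_add_primor (Nat.coprime_one_left N)

/-- Occurrence of the constellation `[2, p_{k+1} - 1]` in `Δ(p_k)`. -/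
private lemma occursB {k : ℕ} (hk : 2 ≤ k) :
    Occurs (primor k) [2, Nat.nth Nat.Prime k - 1] := by
  set N := primor k with hN
  set p := Nat.nth Nat.Prime k with hp
  have hpN : p < N := nth_lt_primor hk
  have hp2 : 4 ≤ p := by have := nth_ge k; omega
  have h6 : 6 ≤ N := six_le_primor hk
  refine ⟨N - 1, by omega, ?_⟩
  have e1 : N - 1 + 2 = N + 1 := by omega
  have e2 : N - 1 + 2 + (p - 1) = N + p := by omega
  refine ⟨?_, ?_, ?_, ?_, ?_⟩
  · exact coprime_sub_primor (by omega) (Nat.coprime_one_left N)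
  · intro m hm1 hm2
    rw [e1] at hm2
    have : m = N := by omega
    subst this
    exact not_coprime_of_dvd Nat.prime_two
      (prime_dvd_primor Nat.prime_two (by omega))
      (prime_dvd_primor Nat.prime_two (by omega))
  · rw [e1]
    exact coprime_add_primor (Nat.coprime_one_left N)
  · intro m hm1 hm2
    rw [e1] at hm1; rw [e2] at hm2
    have hj2 : 2 ≤ m - N := by omega
    have hjp : m - N < p := by omega
    have hq : ((m - N).minFac).Prime := Nat.minFac_prime (by omega)
    have hqd : (m - N).minFac ∣ N := prime_dvd_primor hq
      (lt_of_le_of_lt (Nat.minFac_le (by omega)) hjp)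
    have hqm : (m - N).minFac ∣ m := by
      have hd := Nat.dvd_add hqd (Nat.minFac_dvd (m - N))
      have e : N + (m - N) = m := by omega
      rwa [e] at hd
    exact not_coprime_of_dvd hq hqm hqd
  · show Nat.Coprime (N - 1 + 2 + (p - 1)) N
    rw [e2]
    exact coprime_add_primor ((coprime_nth_primor k))

private lemma nthPrime_succ (k : ℕ) : nthPrime (k + 1) = Nat.nth Nat.Prime k := by
  simp [nthPrime]

/-- From Hypothesis H and `occursA`: infinitely many `n` with
`gap n = p_{k+1} - 1` and `gap (n+1) = 2`. -/
private lemma freqA (hH : HypothesisH) {k : ℕ} (hk : 2 ≤ k) (N : ℕ) :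
    ∃ n : ℕ, N ≤ n ∧ gap n = Nat.nth Nat.Prime k - 1 ∧ gap (n + 1) = 2 := by
  have hp2 : 4 ≤ Nat.nth Nat.Prime k := by have := nth_ge k; omega
  obtain ⟨n, hn, hgap⟩ := hH k (by omega) [Nat.nth Nat.Prime k - 1, 2]
    (by intro a ha; simp at ha; rcases ha with h | h <;> omega)
    (occursA hk)
    (by rw [nthPrime_succ]; simp; omega)
    (by rw [nthPrime_succ]; simp; omega)
    N
  refine ⟨n, hn, ?_, ?_⟩
  · have := hgap 0 (by simp); simpa using this
  · have := hgap 1 (by simp); simpa using this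

/-- From Hypothesis H and `occursB`: infinitely many `n` with
`gap n = 2` and `gap (n+1) = p_{k+1} - 1`. -/
private lemma freqB (hH : HypothesisH) {k : ℕ} (hk : 2 ≤ k) (N : ℕ) :
    ∃ n : ℕ, N ≤ n ∧ gap n = 2 ∧ gap (n + 1) = Nat.nth Nat.Prime k - 1 := by
  have hp2 : 4 ≤ Nat.nth Nat.Prime k := by have := nth_ge k; omega
  obtain ⟨n, hn, hgap⟩ := hH k (by omega) [2, Nat.nth Nat.Prime k - 1]
    (by intro a ha; simp at ha; rcases ha with h | h <;> omega)
    (occursB hk)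
    (by rw [nthPrime_succ]; simp; omega)
    (by rw [nthPrime_succ]; simp; omega)
    N
  refine ⟨n, hn, ?_, ?_⟩
  · have := hgap 0 (by simp); simpa using this
  · have := hgap 1 (by simp); simpa using this

open Filter ENNReal in
theorem stmt_19 (hH : HypothesisH) :
    (∀ M : ℝ, 0 < M →
        {n : ℕ | M * (gap (n + 1) : ℝ) < (gap n : ℝ)}.Infinite ∧
        {n : ℕ | M * (gap n : ℝ) < (gap (n + 1) : ℝ)}.Infinite) ∧
      Filter.limsup (fun n : ℕ => (gap n : ℝ≥0∞) / (gap (n + 1) : ℝ≥0∞)) atTop = ⊤ ∧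
      Filter.liminf (fun n : ℕ => (gap n : ℝ≥0∞) / (gap (n + 1) : ℝ≥0∞)) atTop = 0 := by
  constructor
  · intro M hM
    set k := max 2 (⌈2 * M⌉₊) with hkdef
    have hk2 : 2 ≤ k := le_max_left _ _
    have hkM : 2 * M ≤ (k : ℝ) := le_trans (Nat.le_ceil _) (Nat.cast_le.mpr (le_max_right _ _))
    have hpk : k + 2 ≤ Nat.nth Nat.Prime k := nth_ge k
    have hcast : (2 * M : ℝ) < ((Nat.nth Nat.Prime k - 1 : ℕ) : ℝ) := by
      have h1 : k + 1 ≤ Nat.nth Nat.Prime k - 1 := by omega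
      have := (Nat.cast_le (α := ℝ)).mpr h1
      push_cast at this ⊢
      linarith
    constructor
    · rw [← Nat.frequently_atTop_iff_infinite, frequently_atTop]
      intro a
      obtain ⟨n, hn, h1, h2⟩ := freqA hH hk2 a
      refine ⟨n, hn, ?_⟩
      show M * (gap (n + 1) : ℝ) < (gap n : ℝ)
      rw [h1, h2]
      push_cast
      calc M * 2 = 2 * M := by ring
        _ < _ := by exact_mod_cast hcast
    · rw [← Nat.frequently_atTop_iff_infinite, frequently_atTop]
      intro a
      obtain ⟨n, hn, h1, h2⟩ := freqB hH hk2 a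
      refine ⟨n, hn, ?_⟩
      show M * (gap n : ℝ) < (gap (n + 1) : ℝ)
      rw [h1, h2]
      push_cast
      calc M * 2 = 2 * M := by ring
        _ < _ := by exact_mod_cast hcast
  constructor
  · -- limsup = ⊤
    by_contra h
    obtain ⟨N, hN⟩ := ENNReal.exists_nat_gt h
    set k := max 2 (2 * N) with hkdef
    have hk2 : 2 ≤ k := le_max_left _ _
    have hpk : 2 * N ≤ Nat.nth Nat.Prime k - 1 := by
      have h1 := nth_ge k
      have h2 : 2 * N ≤ k := le_max_right _ _
      omega
    have hfreq : ∃ᶠ n in atTop,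
        (N : ℝ≥0∞) ≤ (gap n : ℝ≥0∞) / (gap (n + 1) : ℝ≥0∞) := by
      rw [frequently_atTop]
      intro a
      obtain ⟨n, hn, h1, h2⟩ := freqA hH hk2 a
      refine ⟨n, hn, ?_⟩
      rw [h1, h2]
      rw [ENNReal.le_div_iff_mul_le (Or.inl (by norm_num)) (Or.inl (by norm_num))]
      have e : (N : ℝ≥0∞) * ((2:ℕ) : ℝ≥0∞) = ((2 * N : ℕ) : ℝ≥0∞) := by push_cast; ring
      rw [e]
      exact Nat.cast_le.mpr hpk
    have := le_limsup_of_frequently_le' hfreq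
    exact absurd (lt_of_le_of_lt this hN) (lt_irrefl _)
  · -- liminf = 0
    by_contra h
    obtain ⟨j, hj⟩ := ENNReal.exists_inv_nat_lt h
    rcases Nat.eq_zero_or_pos j with rfl | hjpos
    · simp at hj
    set k := max 2 (2 * j) with hkdef
    have hk2 : 2 ≤ k := le_max_left _ _
    have hpk : 2 * j ≤ Nat.nth Nat.Prime k - 1 := by
      have h1 := nth_ge k
      have h2 : 2 * j ≤ k := le_max_right _ _
      omega
    have hfreq : ∃ᶠ n in atTop,
        (gap n : ℝ≥0∞) / (gap (n + 1) : ℝ≥0∞) ≤ (j : ℝ≥0∞)⁻¹ := by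
      rw [frequently_atTop]
      intro a
      obtain ⟨n, hn, h1, h2⟩ := freqB hH hk2 a
      refine ⟨n, hn, ?_⟩
      rw [h1, h2]
      have step1 : ((2 : ℕ) : ℝ≥0∞) / ((Nat.nth Nat.Prime k - 1 : ℕ) : ℝ≥0∞)
          ≤ ((2 : ℕ) : ℝ≥0∞) / ((2 * j : ℕ) : ℝ≥0∞) :=
        ENNReal.div_le_div_left (by exact_mod_cast Nat.cast_le.mpr hpk) _
      refine le_trans step1 ?_
      have : ((2 * j : ℕ) : ℝ≥0∞) = 2 * (j : ℝ≥0∞) := by push_cast; ring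
      rw [this]
      have h2' : ((2 : ℕ) : ℝ≥0∞) = 2 * 1 := by norm_num
      rw [h2', ENNReal.mul_div_mul_left 1 (j : ℝ≥0∞) (by norm_num) (by norm_num),
        one_div]
    have := liminf_le_of_frequently_le' hfreq
    exact absurd (lt_of_le_of_lt this hj) (lt_irrefl _)
end
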